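/- Let e₁,…,e_n be an orthonormal basis of ℝ^n and let e*_I denote the axis p-form for a strictly increasing multi-index I of length p. Then ‖e*₁∧⋯∧e*_p + Σ_I b_I e*_I‖* ≤ max{1, Σ_I |b_I|}, provided that b_I = 0 whenever the second-to-last index i_{p-1} of I satisfies i_{p-1} ≤ p. -/

import Mathlib

/-- The comass of an alternating `p`-form `φ` with respect to a bilinear form
(inner product) `g`. -/
noncomputable def comass {W : Type*} [AddCommGroup W] [Module ℝ W] {p : ℕ}
    (φ : W [⋀^Fin p]→ₗ[ℝ] ℝ) (g : W →ₗ[ℝ] W →ₗ[ℝ] ℝ) : ℝ :=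
  sSup {c | ∃ v : Fin p → W,
    (Matrix.of fun i j : Fin p => g (v i) (v j)).det = 1 ∧ φ v = c}

/-- The standard Euclidean inner product on `ℝⁿ` as a bilinear form. -/
noncomputable def stdG (n : ℕ) : (Fin n → ℝ) →ₗ[ℝ] (Fin n → ℝ) →ₗ[ℝ] ℝ :=
  LinearMap.mk₂ ℝ (fun x y => ∑ i, x i * y i)
    (fun x₁ x₂ y => by simp [add_mul, Finset.sum_add_distrib])
    (fun c x y => by simp [Finset.mul_sum, mul_assoc])
    (fun x y₁ y₂ => by simp [mul_add, Finset.sum_add_distrib])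
    (fun c x y => by
      simp only [Pi.smul_apply, smul_eq_mul, Finset.mul_sum]
      exact Finset.sum_congr rfl fun i _ => by ring)

/-- The axis `p`-form `e*_I = e*_{i₁} ∧ ⋯ ∧ e*_{i_p}` on `ℝⁿ`. -/
noncomputable def axisForm {n p : ℕ} (I : Fin p → Fin n) :
    (Fin n → ℝ) [⋀^Fin p]→ₗ[ℝ] ℝ :=
  ((Pi.basisFun ℝ (Fin p)).det).compLinearMap (LinearMap.funLeft ℝ ℝ I)

/-!
Write `x_I` for the `p × p` minor of the matrix `M` whose rows span a unit simple `p`-vector: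
these are its Plücker coordinates, and by Cauchy–Binet `∑_I x_I² = det (M Mᵀ) = 1`. If `I`
has two indices outside `J = {1, …, p}`, the Plücker relation `x_J x_I = ∑ᵢ x_{Pᵢ} x_{Qᵢ}`
involves coordinates that are distinct from `x_J`, `x_I` and from each other, so
`2 |x_J x_I| ≤ ∑ᵢ (x_{Pᵢ}² + x_{Qᵢ}²) ≤ 1 - x_J² - x_I²`, that is `|x_J| + |x_I| ≤ 1`. The form
therefore takes at most the value `|x_J| + (1 - |x_J|) ∑ |b_I| ≤ max 1 (∑ |b_I|)`.
-/

open Matrix Finset Function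

namespace Function

variable {α β : Type*} [DecidableEq α] {f : α → β}

theorem mem_range_update_iff (hf : Injective f) (i : α) (c x : β) :
    x ∈ Set.range (update f i c) ↔ x = c ∨ x ∈ Set.range f ∧ x ≠ f i := by
  constructor
  · rintro ⟨l, rfl⟩
    by_cases h : l = i
    · subst h; simp
    · simp [h, hf.ne h]
  · rintro (rfl | ⟨⟨l, rfl⟩, hl⟩)
    · exact ⟨i, update_self i _ f⟩
    · exact ⟨l, update_of_ne (fun h => hl (congrArg f h)) _ _⟩

theorem Injective.update_of_notMem_range (hf : Injective f) (i : α) {c : β}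
    (hc : c ∉ Set.range f) : Injective (update f i c) := by
  intro l l' h
  by_cases hl : l = i <;> by_cases hl' : l' = i
  · rw [hl, hl']
  · simp only [hl, update_self, update_of_ne hl'] at h; exact absurd ⟨l', h.symm⟩ hc
  · simp only [hl', update_self, update_of_ne hl] at h; exact absurd ⟨l, h⟩ hc
  · rw [update_of_ne hl, update_of_ne hl'] at h; exact hf h

end Function

theorem AlternatingMap.sum_apply {R M N ι κ : Type*} [Semiring R] [AddCommMonoid M]
    [AddCommMonoid N] [Module R M] [Module R N] (s : Finset κ) (f : κ → M [⋀^ι]→ₗ[R] N)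
    (v : ι → M) : (∑ k ∈ s, f k) v = ∑ k ∈ s, f k v :=
  map_sum ({ toFun := fun φ => φ v, map_zero' := rfl, map_add' := fun _ _ => rfl } :
    (M [⋀^ι]→ₗ[R] N) →+ N) f s

theorem two_mul_abs_sum_mul_le {ι R : Type*} [CommRing R] [LinearOrder R] [IsStrictOrderedRing R]
    (s : Finset ι) (u v : ι → R) :
    2 * |∑ i ∈ s, u i * v i| ≤ ∑ i ∈ s, (u i ^ 2 + v i ^ 2) :=
  calc 2 * |∑ i ∈ s, u i * v i| ≤ 2 * ∑ i ∈ s, |u i * v i| := by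
        gcongr; exact abs_sum_le_sum_abs _ _
    _ = ∑ i ∈ s, 2 * |u i| * |v i| := by simp_rw [mul_sum, abs_mul, mul_assoc]
    _ ≤ ∑ i ∈ s, (u i ^ 2 + v i ^ 2) := sum_le_sum fun i _ => by
        simpa only [sq_abs] using two_mul_le_add_sq |u i| |v i|

namespace Matrix

theorem submatrix_id_update {m n o α : Type*} [DecidableEq o] (M : Matrix m n α) (J : o → n)
    (i : o) (c : n) :
    M.submatrix id (update J i c) = (M.submatrix id J).updateCol i fun k => M k c := by
  ext k l
  by_cases h : l = i
  · subst h; simp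
  · simp [h]

section CommRing

variable {m n R : Type*} [Fintype m] [DecidableEq m] [CommRing R]

theorem det_submatrix_eq_zero_of_not_injective (M : Matrix m n R) {f : m → n}
    (hf : ¬ Injective f) : (M.submatrix id f).det = 0 := by
  obtain ⟨i, l, hfil, hne⟩ := not_injective_iff.1 hf
  exact det_zero_of_column_eq hne fun k => by simp [hfil]

theorem det_submatrix_comp_perm_sq (M : Matrix m n R) (f : m → n) (σ : Equiv.Perm m) :
    (M.submatrix id (f ∘ σ)).det ^ 2 = (M.submatrix id f).det ^ 2 := by
  rw [show M.submatrix id (f ∘ σ) = (M.submatrix id f).submatrix id σ from rfl, det_permute',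
    mul_pow, ← Int.cast_pow, ← Units.val_pow_eq_pow_val, Int.units_sq, Units.val_one,
    Int.cast_one, one_mul]

theorem det_updateCol_sum_smul {ι : Type*} (B : Matrix m m R) (j : m) (s : Finset ι)
    (c : ι → R) (u : ι → m → R) :
    (B.updateCol j (∑ i ∈ s, c i • u i)).det = ∑ i ∈ s, c i * (B.updateCol j (u i)).det := by
  have hrow : ∀ v, (Bᵀ.updateRow j v).det = detRowAlternating (update (of.symm Bᵀ) j v) :=
    fun v => rfl
  simp_rw [← det_transpose (B.updateCol j _), ← updateRow_transpose, hrow,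
    AlternatingMap.map_update_sum, AlternatingMap.map_update_smul, smul_eq_mul]

/-- Sylvester's exchange identity: replace the `j`-th column of `B` by
`A *ᵥ cramer A (B · j) = det A • (B · j)` and expand linearly. -/
theorem det_mul_det_eq_sum_det_updateCol (A B : Matrix m m R) (j : m) :
    A.det * B.det =
      ∑ i, (A.updateCol i fun k => B k j).det * (B.updateCol j fun k => A k i).det := by
  have hcols : A *ᵥ A.cramer (fun k => B k j) =
      ∑ i, A.cramer (fun k => B k j) i • fun k => A k i := by
    ext k
    simp [mulVec, dotProduct, Finset.sum_apply, mul_comm]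
  calc A.det * B.det = (B.updateCol j (A *ᵥ A.cramer fun k => B k j)).det := by
        rw [mulVec_cramer, det_updateCol_smul, updateCol_eq_self]
    _ = _ := by
        simp_rw [hcols, det_updateCol_sum_smul, cramer_apply]

theorem det_submatrix_mul_det_submatrix (M : Matrix m n R) (J K : m → n) (j : m) :
    (M.submatrix id J).det * (M.submatrix id K).det =
      ∑ i, (M.submatrix id (update J i (K j))).det * (M.submatrix id (update K j (J i))).det := by
  simp_rw [submatrix_id_update]
  exact det_mul_det_eq_sum_det_updateCol _ _ j

variable [Fintype n]

theorem det_mul_transpose_eq_sum (A B : Matrix m n R) :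
    (A * Bᵀ).det = ∑ f : m → n, (∏ i, B i (f i)) * (A.submatrix id f).det := by
  have hrows : B * Aᵀ = of fun i => ∑ k, B i k • Aᵀ k := by
    ext i j
    simp [mul_apply, Finset.sum_apply]
  rw [← det_transpose, transpose_mul, transpose_transpose, hrows]
  change detRowAlternating (fun i => ∑ k, B i k • Aᵀ k) = _
  rw [← AlternatingMap.coe_multilinearMap, MultilinearMap.map_sum]
  refine Finset.sum_congr rfl fun f _ => ?_
  rw [AlternatingMap.coe_multilinearMap, AlternatingMap.map_smul_univ, smul_eq_mul,
    ← det_transpose (A.submatrix id f)]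
  rfl

theorem sum_sq_det_submatrix_eq (M : Matrix m n R) :
    ∑ f : m → n, (M.submatrix id f).det ^ 2 = (Fintype.card m).factorial * (M * Mᵀ).det := by
  have hperm : ∀ σ : Equiv.Perm m,
      ∑ f : m → n, (∏ i, M (σ i) (f i)) * (M.submatrix id f).det =
        Equiv.Perm.sign σ * (M * Mᵀ).det := fun σ => by
    rw [← det_permute', show (M * Mᵀ).submatrix id σ = M * (M.submatrix σ id)ᵀ from rfl,
      det_mul_transpose_eq_sum]
    rfl
  calc ∑ f : m → n, (M.submatrix id f).det ^ 2
      = ∑ f : m → n, ∑ σ : Equiv.Perm m, (Equiv.Perm.sign σ : R) *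
          ((∏ i, M (σ i) (f i)) * (M.submatrix id f).det) := by
        refine Finset.sum_congr rfl fun f _ => ?_
        rw [sq]
        nth_rw 1 [det_apply']
        rw [Finset.sum_mul]
        exact Finset.sum_congr rfl fun σ _ => by simp only [submatrix_apply, id]; ring
    _ = ∑ σ : Equiv.Perm m, (M * Mᵀ).det := by
        rw [Finset.sum_comm]
        refine Finset.sum_congr rfl fun σ _ => ?_
        rw [← Finset.mul_sum, hperm, ← mul_assoc, ← Int.cast_mul, ← Units.val_mul,
          Int.units_mul_self, Units.val_one, Int.cast_one, one_mul]
    _ = _ := by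
        rw [Finset.sum_const, Finset.card_univ, Fintype.card_perm, nsmul_eq_mul]

end CommRing

section Ordered

variable {m n R : Type*} [Fintype m] [DecidableEq m] [Fintype n]
  [CommRing R] [LinearOrder R] [IsStrictOrderedRing R]

theorem sum_sq_det_submatrix_le {ι : Type*} (M : Matrix m n R) (s : Finset ι) (T : ι → m → n)
    (hinj : ∀ e ∈ s, Injective (T e)) (hrange : Set.InjOn (fun e => Set.range (T e)) s) :
    ∑ e ∈ s, (M.submatrix id (T e)).det ^ 2 ≤ (M * Mᵀ).det := by
  classical
  have hfac : (0 : R) < (Fintype.card m).factorial := by exact_mod_cast Nat.factorial_pos _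
  have hreindex : Set.InjOn (fun x : ι × Equiv.Perm m => T x.1 ∘ x.2)
      ((s ×ˢ univ : Finset (ι × Equiv.Perm m)) : Set (ι × Equiv.Perm m)) := by
    rintro ⟨e, σ⟩ he ⟨e', σ'⟩ he' h
    simp only [coe_product, coe_univ, Set.mem_prod, mem_coe, Set.mem_univ, and_true] at he he' h
    obtain rfl : e = e' := hrange he he' <| by
      simpa only [EquivLike.range_comp] using congrArg Set.range h
    rw [Prod.mk.injEq, Equiv.ext_iff]
    exact ⟨rfl, fun i => hinj e he (congrFun h i)⟩
  rw [← mul_le_mul_iff_right₀ hfac, ← sum_sq_det_submatrix_eq]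
  calc (Fintype.card m).factorial * ∑ e ∈ s, (M.submatrix id (T e)).det ^ 2
      = ∑ x ∈ s ×ˢ (univ : Finset (Equiv.Perm m)), (M.submatrix id (T x.1 ∘ x.2)).det ^ 2 := by
        simp_rw [sum_product, det_submatrix_comp_perm_sq, sum_const, card_univ,
          Fintype.card_perm, nsmul_eq_mul, mul_sum]
    _ = ∑ f ∈ (s ×ˢ univ).image (fun x : ι × Equiv.Perm m => T x.1 ∘ x.2),
          (M.submatrix id f).det ^ 2 := by
        rw [sum_image hreindex]
    _ ≤ ∑ f : m → n, (M.submatrix id f).det ^ 2 :=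
        sum_le_univ_sum_of_nonneg fun f => sq_nonneg _

theorem sq_det_submatrix_le (M : Matrix m n R) {f : m → n} (hf : Injective f) :
    (M.submatrix id f).det ^ 2 ≤ (M * Mᵀ).det := by
  simpa using sum_sq_det_submatrix_le M {f} id (by simpa using hf) (by simp)

end Ordered

end Matrix

section Exchange

variable {m n : Type*} [DecidableEq m]

/-- The index tuples occurring in the Plücker relation for `J` and `K` at position `j`:
on the left `J` (at `none`) and `update J i (K j)` (at `some i`), on the right `K` and
`update K j (J i)`. -/
def exchangeFamily (J K : m → n) (j : m) : Option m ⊕ Option m → m → n :=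
  Sum.elim (Option.elim · J fun i => update J i (K j)) (Option.elim · K fun i => update K j (J i))

variable {J K : m → n} {j : m} {S : Finset m}

theorem injective_exchangeFamily (hJ : Injective J) (hK : Injective K)
    (haJ : K j ∉ Set.range J) (hS : ∀ i ∈ S, J i ∉ Set.range K) :
    ∀ e ∈ (insertNone S).disjSum (insertNone S), Injective (exchangeFamily J K j e) := by
  rintro ((_ | i) | (_ | i)) he
  · exact hJ
  · exact hJ.update_of_notMem_range i haJ
  · exact hK
  · exact hK.update_of_notMem_range j (hS i (by simpa using he))

theorem injOn_range_exchangeFamily (hJ : Injective J) (hK : Injective K) {b : n}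
    (hab : K j ≠ b) (hbK : b ∈ Set.range K) (haJ : K j ∉ Set.range J) (hbJ : b ∉ Set.range J)
    (hS : ∀ i ∈ S, J i ∉ Set.range K) :
    Set.InjOn (fun e => Set.range (exchangeFamily J K j e))
      ↑((insertNone S).disjSum (insertNone S)) := by
  have hKj : K j ∈ Set.range K := ⟨j, rfl⟩
  rintro ((_ | i) | (_ | i)) hi ((_ | i') | (_ | i')) hi' h <;>
    simp only [Set.ext_iff, exchangeFamily, Sum.elim_inl, Sum.elim_inr, Option.elim_none,
      Option.elim_some, mem_range_update_iff hJ, mem_range_update_iff hK] at h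
  -- membership of `K j` and `b` separates the four kinds of tuples
  all_goals try first
    | rfl
    | (have := h b; have := h (K j); tauto)
  · obtain rfl : i' = i := hJ <| by
      have := h (J i'); have : J i' ∈ Set.range J := ⟨i', rfl⟩
      have : J i' ≠ K j := fun he => haJ ⟨i', he⟩
      tauto
    rfl
  · obtain rfl : i = i' := hJ <| by
      have := h (J i); have := hS i (by simpa using hi)
      tauto
    rfl

end Exchange

theorem Matrix.sq_abs_add_abs_det_submatrix_le {m n R : Type*} [Fintype m] [DecidableEq m]
    [Fintype n] [CommRing R] [LinearOrder R] [IsStrictOrderedRing R]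
    (M : Matrix m n R) {J K : m → n} (hJ : Injective J) (hK : Injective K) {a b : n}
    (hab : a ≠ b) (haK : a ∈ Set.range K) (hbK : b ∈ Set.range K) (haJ : a ∉ Set.range J)
    (hbJ : b ∉ Set.range J) :
    (|(M.submatrix id J).det| + |(M.submatrix id K).det|) ^ 2 ≤ (M * Mᵀ).det := by
  classical
  obtain ⟨j, rfl⟩ := haK
  set S := univ.filter fun i => J i ∉ Set.range K
  have hS : ∀ i ∈ S, J i ∉ Set.range K := fun i hi => (mem_filter.1 hi).2
  have hexch : (M.submatrix id J).det * (M.submatrix id K).det =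
      ∑ i ∈ S, (M.submatrix id (update J i (K j))).det *
        (M.submatrix id (update K j (J i))).det := by
    rw [det_submatrix_mul_det_submatrix M J K j, sum_filter_of_ne]
    -- `update K j (J i)` repeats a column when `J i ∈ range K`
    rintro i - hne ⟨l, hl⟩
    have hlj : l ≠ j := by rintro rfl; exact haJ ⟨i, hl.symm⟩
    refine hne (mul_eq_zero_of_right _ (det_submatrix_eq_zero_of_not_injective M fun hinj => ?_))
    exact hlj (hinj (by simp [update_of_ne hlj, hl])).symm
  have hbessel := sum_sq_det_submatrix_le M _ _ (injective_exchangeFamily hJ hK haJ hS)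
    (injOn_range_exchangeFamily hJ hK hab hbK haJ hbJ hS)
  simp only [sum_disjSum, sum_insertNone, exchangeFamily, Sum.elim_inl, Sum.elim_inr,
    Option.elim_none, Option.elim_some] at hbessel
  have hamgm := two_mul_abs_sum_mul_le S (fun i => (M.submatrix id (update J i (K j))).det)
    (fun i => (M.submatrix id (update K j (J i))).det)
  rw [← hexch, abs_mul] at hamgm
  calc (|(M.submatrix id J).det| + |(M.submatrix id K).det|) ^ 2
      = (M.submatrix id J).det ^ 2 + (M.submatrix id K).det ^ 2 +
          2 * (|(M.submatrix id J).det| * |(M.submatrix id K).det|) := by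
        rw [add_sq, sq_abs, sq_abs]; ring
    _ ≤ _ := by rw [sum_add_distrib] at hamgm; linarith

theorem add_sum_mul_le_max {ι R : Type*} [CommRing R] [LinearOrder R] [IsStrictOrderedRing R]
    (s : Finset ι) {x : R} (b y : ι → R) (hx : |x| ≤ 1)
    (hy : ∀ i ∈ s, b i ≠ 0 → |x| + |y i| ≤ 1) :
    x + ∑ i ∈ s, b i * y i ≤ max 1 (∑ i ∈ s, |b i|) := by
  have hterm : ∀ i ∈ s, b i * y i ≤ |b i| * (1 - |x|) := by
    intro i hi
    rcases eq_or_ne (b i) 0 with h | h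
    · simp [h]
    · calc b i * y i ≤ |b i| * |y i| := (le_abs_self _).trans (abs_mul _ _).le
        _ ≤ |b i| * (1 - |x|) := by gcongr; linarith [hy i hi h]
  calc x + ∑ i ∈ s, b i * y i ≤ |x| * 1 + (1 - |x|) * ∑ i ∈ s, |b i| := by
        rw [mul_one, mul_comm, sum_mul]
        exact add_le_add (le_abs_self x) (sum_le_sum hterm)
    _ ≤ |x| * max 1 (∑ i ∈ s, |b i|) + (1 - |x|) * max 1 (∑ i ∈ s, |b i|) := by
        have hx' : 0 ≤ 1 - |x| := by linarith
        gcongr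
        exacts [le_max_left _ _, le_max_right _ _]
    _ = max 1 (∑ i ∈ s, |b i|) := by ring

theorem gram_stdG {n p : ℕ} (v : Fin p → Fin n → ℝ) :
    (Matrix.of fun i j : Fin p => stdG n (v i) (v j)) = Matrix.of v * (Matrix.of v)ᵀ := by
  ext i j
  simp [stdG, Matrix.mul_apply]

theorem axisForm_apply {n p : ℕ} (I : Fin p → Fin n) (v : Fin p → Fin n → ℝ) :
    axisForm I v = ((Matrix.of v).submatrix id I).det := by
  rw [axisForm, AlternatingMap.compLinearMap_apply, Pi.basisFun_det_apply]
  rfl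

theorem Fin.notMem_range_castLE {n p : ℕ} (h : p ≤ n) {a : Fin n} (ha : p ≤ (a : ℕ)) :
    a ∉ Set.range (Fin.castLE h) := by
  rintro ⟨i, rfl⟩
  exact absurd ha (not_le.2 i.isLt)

theorem abs_det_castLE_add_abs_det_le_one {n p : ℕ} (hp2 : 2 ≤ p) (hpn : p ≤ n)
    (M : Matrix (Fin p) (Fin n) ℝ) (hM : (M * Mᵀ).det = 1) {I : Fin p → Fin n}
    (hI : StrictMono I) (hIp : p ≤ (I ⟨p - 2, Nat.sub_lt_self two_pos hp2⟩ : ℕ)) :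
    |(M.submatrix id (Fin.castLE hpn)).det| + |(M.submatrix id I).det| ≤ 1 := by
  have hlt : I ⟨p - 2, by omega⟩ < I ⟨p - 1, by omega⟩ := hI (by simp [Fin.lt_def]; omega)
  have hsq := M.sq_abs_add_abs_det_submatrix_le (Fin.castLE_injective hpn) hI.injective
    hlt.ne' ⟨_, rfl⟩ ⟨_, rfl⟩ (Fin.notMem_range_castLE hpn (hIp.trans hlt.le))
    (Fin.notMem_range_castLE hpn hIp)
  rw [hM] at hsq
  exact (sq_le_one_iff₀ (by positivity)).1 hsq

/-- Harvey–Lawson (Calibrated foliations, Cor. 2.11):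
`‖e*₁∧⋯∧e*_p + Σ_I b_I e*_I‖* ≤ max {1, Σ_I |b_I|}` provided `b_I = 0` whenever
the second-to-last index `i_{p-1}` of `I` satisfies `i_{p-1} ≤ p`
(0-indexed: `I ⟨p-2⟩ < p`); the coefficients are supported on strictly
increasing multi-indices. -/
theorem stmt6 (n p : ℕ) (hp2 : 2 ≤ p) (hpn : p ≤ n)
    (b : (Fin p → Fin n) → ℝ)
    (hbmono : ∀ I : Fin p → Fin n, ¬ StrictMono I → b I = 0)
    (hb : ∀ I : Fin p → Fin n, StrictMono I →
      ((I ⟨p - 2, by omega⟩ : ℕ) < p) → b I = 0) :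
    comass (axisForm (Fin.castLE hpn) + ∑ I : Fin p → Fin n, b I • axisForm I)
      (stdG n) ≤ max 1 (∑ I : Fin p → Fin n, |b I|) := by
  refine Real.sSup_le ?_ (zero_le_one.trans (le_max_left _ _))
  rintro _ ⟨v, hv, rfl⟩
  rw [gram_stdG] at hv
  simp only [AlternatingMap.add_apply, AlternatingMap.sum_apply,
    AlternatingMap.smul_apply, smul_eq_mul, axisForm_apply]
  refine add_sum_mul_le_max _ _ _ ?_ fun I _ hbI => ?_
  · have hsq := sq_det_submatrix_le (Matrix.of v) (Fin.castLE_injective hpn)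
    rw [hv] at hsq
    exact sq_le_one_iff_abs_le_one _ |>.1 hsq
  · have hI : StrictMono I := not_not.1 (mt (hbmono I) hbI)
    exact abs_det_castLE_add_abs_det_le_one hp2 hpn _ hv hI (not_lt.1 (mt (hb I hI) hbI))
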